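/- Let M be a Turing machine in Mathlib's TM0 model over a finite tape alphabet Γ (with a distinguished blank symbol) and a finite state set Λ, started in its initial state on the all-blank tape (input ε). Define the head position after i steps as the net displacement of the head from its starting cell (number of right-moves minus number of left-moves among the first i steps). Let N = Fintype.card Λ * Fintype.card Γ. If for every i ≤ N the machine has not halted within i steps and the head position after i steps is 0, then the machine never halts and the head position after every number of steps is 0. -/
import Mathlib


/-- One step of a TM0 machine, additionally tracking the net head displacement
(`+1` for a right-move, `-1` for a left-move). -/
def stepPos {Γ Λ : Type} [Inhabited Γ] [Inhabited Λ] (M : Turing.TM0.Machine Γ Λ)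
    (p : Turing.TM0.Cfg Γ Λ × ℤ) : Option (Turing.TM0.Cfg Γ Λ × ℤ) :=
  (Turing.TM0.step M p.1).map fun c' =>
    (c', p.2 +
      match M p.1.q p.1.Tape.head with
      | some (_, Turing.TM0.Stmt.move Turing.Dir.left) => -1
      | some (_, Turing.TM0.Stmt.move Turing.Dir.right) => 1
      | _ => 0)

/-- Run the machine for `n` steps from configuration `c`, tracking the head
position (net displacement from the starting cell); `none` means the machine
halted at some point within the first `n` steps. -/
def runPos {Γ Λ : Type} [Inhabited Γ] [Inhabited Λ] (M : Turing.TM0.Machine Γ Λ)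
    (c : Turing.TM0.Cfg Γ Λ) : ℕ → Option (Turing.TM0.Cfg Γ Λ × ℤ)
  | 0 => some (c, 0)
  | n + 1 => (runPos M c n).bind (stepPos M)

theorem runPos_shift {Γ Λ : Type} [Inhabited Γ] [Inhabited Λ]
    (M : Turing.TM0.Machine Γ Λ) (c c' : Turing.TM0.Cfg Γ Λ) (m : ℕ)
    (hm : runPos M c m = some (c', 0)) (n : ℕ) :
    runPos M c (m + n) = runPos M c' n := by
  induction n with
  | zero => simpa [runPos] using hm
  | succ n ih => rw [← Nat.add_assoc]; simp [runPos, ih]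


/-- Pigeonhole for a machine confined to its starting cell on the blank tape:
if for every `i ≤ card Λ * card Γ` the machine has not halted within `i` steps
and the head position after `i` steps is `0`, then the machine never halts and
the head position is always `0`. -/
theorem confined_prefix_implies_confined_forever {Γ Λ : Type} [Inhabited Γ] [Inhabited Λ]
    [Fintype Γ] [Fintype Λ] (M : Turing.TM0.Machine Γ Λ)
    (h : ∀ i ≤ Fintype.card Λ * Fintype.card Γ,
      ∃ p, runPos M (Turing.TM0.init ([] : List Γ)) i = some p ∧ p.2 = 0) :
    ∀ m : ℕ, ∃ p, runPos M (Turing.TM0.init ([] : List Γ)) m = some p ∧ p.2 = 0 := by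
  classical
  set N := Fintype.card Λ * Fintype.card Γ with hN
  set c₀ : Turing.TM0.Cfg Γ Λ := Turing.TM0.init ([] : List Γ) with hc₀
  -- all configurations in the confined prefix have the form ⟨q, (Turing.Tape.mk₁ ([] : List Γ)).write a⟩
  have key : ∀ i ≤ N, ∃ q a, runPos M c₀ i = some (⟨q, (Turing.Tape.mk₁ ([] : List Γ)).write a⟩, 0) := by
    intro i
    induction i with
    | zero =>
      intro _
      refine ⟨default, (Turing.Tape.mk₁ ([] : List Γ)).head, ?_⟩
      simp [runPos, hc₀, Turing.TM0.init, Turing.Tape.write_self]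
    | succ i ih =>
      intro hi
      obtain ⟨q, a, hqa⟩ := ih (Nat.le_of_succ_le hi)
      obtain ⟨p, hp, hp0⟩ := h (i + 1) hi
      have hrun : runPos M c₀ (i + 1) = stepPos M (⟨q, (Turing.Tape.mk₁ ([] : List Γ)).write a⟩, 0) := by
        simp [runPos, hqa]
      have hhead : ((Turing.Tape.mk₁ ([] : List Γ)).write a).head = a := rfl
      rcases hM : M q a with _ | ⟨q', s⟩
      · exfalso
        rw [hp] at hrun
        simp [stepPos, Turing.TM0.step, hhead, hM] at hrun
      · rcases s with d | b
        · exfalso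
          rw [hp] at hrun
          rcases d with _ | _ <;>
            · simp [stepPos, Turing.TM0.step, hhead, hM] at hrun
              rw [hrun] at hp0
              simp at hp0
        · refine ⟨q', b, ?_⟩
          rw [hrun]
          simp [stepPos, Turing.TM0.step, hhead, hM]
          rfl
  -- choose the data
  choose q a hqa using fun i (hi : i ≤ N) => key i hi
  -- pigeonhole on Fin (N+1)
  have hcard : Fintype.card (Λ × Γ) < Fintype.card (Fin (N + 1)) := by
    simp [Fintype.card_prod, hN]
  obtain ⟨i, j, hij, heq⟩ := Fintype.exists_ne_map_eq_of_card_lt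
    (fun k : Fin (N + 1) => (q k.1 (Nat.lt_succ_iff.mp k.2), a k.1 (Nat.lt_succ_iff.mp k.2)))
    hcard
  wlog hlt : (i : ℕ) < (j : ℕ) generalizing i j
  · exact this j i hij.symm heq.symm
      (lt_of_le_of_ne (Nat.le_of_not_lt hlt) (fun e => hij (Fin.ext e.symm)))
  set i' := (i : ℕ); set j' := (j : ℕ)
  have hi' : i' ≤ N := Nat.lt_succ_iff.mp i.2
  have hj' : j' ≤ N := Nat.lt_succ_iff.mp j.2
  have hsame : runPos M c₀ i' = runPos M c₀ j' := by
    rw [hqa i' hi', hqa j' hj']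
    have h1 : q i' hi' = q j' hj' := congrArg Prod.fst heq
    have h2 : a i' hi' = a j' hj' := congrArg Prod.snd heq
    rw [h1, h2]
  -- periodicity
  have hper : ∀ t, runPos M c₀ (j' + t) = runPos M c₀ (i' + t) := by
    intro t
    rw [runPos_shift M c₀ _ j' (by rw [← hsame, hqa i' hi']) t,
        runPos_shift M c₀ _ i' (hqa i' hi') t]
  -- strong induction
  intro m
  induction m using Nat.strong_induction_on with
  | _ m IH =>
    by_cases hm : m ≤ N
    · exact h m hm
    · have hjm : j' ≤ m := le_trans hj' (Nat.le_of_not_le hm)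
      have : runPos M c₀ m = runPos M c₀ (i' + (m - j')) := by
        rw [← hper (m - j'), Nat.add_sub_cancel' hjm]
      rw [this]
      exact IH (i' + (m - j')) (by omega)
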